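/- arXiv:2503.23548 — 2 statements merged into one kernel-verified Lean document; each statement's English description precedes it below -/
import Mathlib

section
/- Let A, B be nonempty closed convex subsets of a uniformly convex Banach space X. Suppose {(x_n, y_n)} and {(w_n, z_n)} are sequences in A × B and {(u_n, v_n)} is a sequence in B × A such that ‖(x_n, y_n) − (u_n, v_n)‖ → dist(A,B) and ‖(w_n, z_n) − (u_n, v_n)‖ → dist(A,B). Then ‖(x_n, y_n) − (w_n, z_n)‖ → 0. -/
/-! If `a, a' ∈ A` and `b ∈ B`, the midpoint of `a, a'` lies in `A`, so
`‖(a - b) + (a' - b)‖ ≥ 2 dist(A, B)`. Hence if both `‖a n - b n‖` and `‖a' n - b n‖` tend to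
`dist(A, B)`, uniform convexity forces `a n - a' n → 0`. Applied in `A` to `x, w` against `u` and in
`B` to `y, z` against `v`, this gives both coordinates of `(x n, y n) - (w n, z n)`. -/

open Filter Topology

/-- `setDist A B = inf {‖a - b‖ : a ∈ A, b ∈ B}`. -/
noncomputable def setDist {X : Type*} [NormedAddCommGroup X] (A B : Set X) : ℝ :=
  sInf {d : ℝ | ∃ a ∈ A, ∃ b ∈ B, d = ‖a - b‖}

section UniformConvex

variable {E ι : Type*} [NormedAddCommGroup E] [NormedSpace ℝ E] {l : Filter ι}

lemma norm_div_norm_smul_le {d : ℝ} (hd : 0 ≤ d) (x : E) : ‖(d / ‖x‖) • x‖ ≤ d := by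
  rcases eq_or_ne x 0 with rfl | hx
  · simpa using hd
  · rw [norm_smul, Real.norm_of_nonneg (by positivity), div_mul_cancel₀ _ (norm_ne_zero_iff.2 hx)]

lemma norm_div_norm_smul_sub_le (d : ℝ) (x : E) : ‖(d / ‖x‖) • x - x‖ ≤ |d - ‖x‖| := by
  rcases eq_or_ne x 0 with rfl | hx
  · simp
  · have hx' : ‖x‖ ≠ 0 := norm_ne_zero_iff.2 hx
    refine le_of_eq ?_
    calc ‖(d / ‖x‖) • x - x‖ = |d / ‖x‖ - 1| * ‖x‖ := by
          rw [← Real.norm_eq_abs, ← norm_smul, sub_smul, one_smul]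
      _ = |d - ‖x‖| := by
          rw [← abs_norm x, ← abs_mul, abs_norm, sub_mul, div_mul_cancel₀ _ hx', one_mul]

variable [UniformConvexSpace E]

lemma tendsto_sub_nhds_zero_of_norm_le_of_tendsto_norm_add {r : ℝ} {a b : ι → E}
    (ha : ∀ᶠ i in l, ‖a i‖ ≤ r) (hb : ∀ᶠ i in l, ‖b i‖ ≤ r)
    (hab : Tendsto (fun i => ‖a i + b i‖) l (𝓝 (2 * r))) :
    Tendsto (fun i => a i - b i) l (𝓝 0) := by
  refine NormedAddGroup.tendsto_nhds_zero.2 fun ε hε => ?_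
  obtain ⟨δ, hδ, hball⟩ := exists_forall_closed_ball_dist_add_le_two_mul_sub E hε r
  filter_upwards [ha, hb, hab.eventually (lt_mem_nhds (sub_lt_self _ hδ))] with i hai hbi habi
  by_contra! hε_le
  exact (hball hai hbi hε_le).not_gt habi

-- Radially projecting `a i`, `b i` onto the sphere of radius `d` reduces this to the bounded case.
theorem tendsto_sub_nhds_zero_of_tendsto_norm {d : ℝ} {a b : ι → E}
    (ha : Tendsto (fun i => ‖a i‖) l (𝓝 d)) (hb : Tendsto (fun i => ‖b i‖) l (𝓝 d))
    (hab : Tendsto (fun i => ‖a i + b i‖) l (𝓝 (2 * d))) :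
    Tendsto (fun i => a i - b i) l (𝓝 0) := by
  rcases l.eq_or_neBot with rfl | _
  · exact tendsto_bot
  have hd : 0 ≤ d := ge_of_tendsto' ha fun _ => norm_nonneg _
  set a' := fun i => (d / ‖a i‖) • a i
  set b' := fun i => (d / ‖b i‖) • b i
  have ha' : Tendsto (fun i => a' i - a i) l (𝓝 0) :=
    squeeze_zero_norm (fun i => norm_div_norm_smul_sub_le d (a i))
      (by simpa using (ha.const_sub d).abs)
  have hb' : Tendsto (fun i => b' i - b i) l (𝓝 0) :=
    squeeze_zero_norm (fun i => norm_div_norm_smul_sub_le d (b i))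
      (by simpa using (hb.const_sub d).abs)
  have hab' : Tendsto (fun i => ‖a' i + b' i‖) l (𝓝 (2 * d)) := by
    refine tendsto_of_tendsto_of_dist hab (squeeze_zero (fun _ => dist_nonneg)
      (fun i => dist_norm_norm_le (a i + b i) (a' i + b' i)) ?_)
    simpa using ((ha'.add hb').neg.congr fun i => by abel).norm
  have h' := tendsto_sub_nhds_zero_of_norm_le_of_tendsto_norm_add
    (.of_forall fun i => norm_div_norm_smul_le hd (a i))
    (.of_forall fun i => norm_div_norm_smul_le hd (b i)) hab'
  simpa using (h'.sub (ha'.sub hb')).congr fun i => by abel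

end UniformConvex

lemma tendsto_of_tendsto_max_of_le {ι : Type*} {l : Filter ι} {f g : ι → ℝ} {d : ℝ}
    (hf : ∀ i, d ≤ f i) (hg : ∀ i, d ≤ g i)
    (h : Tendsto (fun i => max (f i) (g i)) l (𝓝 d)) :
    Tendsto f l (𝓝 d) ∧ Tendsto g l (𝓝 d) :=
  ⟨tendsto_of_tendsto_of_tendsto_of_le_of_le tendsto_const_nhds h hf fun _ => le_max_left _ _,
    tendsto_of_tendsto_of_tendsto_of_le_of_le tendsto_const_nhds h hg fun _ => le_max_right _ _⟩

section SetDist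

variable {X : Type*} [NormedAddCommGroup X] {A B : Set X}

lemma setDist_le_norm_sub {a b : X} (ha : a ∈ A) (hb : b ∈ B) : setDist A B ≤ ‖a - b‖ :=
  csInf_le ⟨0, by rintro _ ⟨a, -, b, -, rfl⟩; exact norm_nonneg _⟩ ⟨a, ha, b, hb, rfl⟩

lemma setDist_comm (A B : Set X) : setDist A B = setDist B A := by
  unfold setDist
  congr 1
  ext t
  constructor <;> rintro ⟨a, ha, b, hb, rfl⟩ <;> exact ⟨b, hb, a, ha, norm_sub_rev _ _⟩

variable [NormedSpace ℝ X]

lemma two_mul_setDist_le_norm_add (hA : Convex ℝ A) {a₁ a₂ b : X} (ha₁ : a₁ ∈ A) (ha₂ : a₂ ∈ A)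
    (hb : b ∈ B) : 2 * setDist A B ≤ ‖(a₁ - b) + (a₂ - b)‖ := by
  have hmid : (a₁ - b) + (a₂ - b) = (2 : ℝ) • (midpoint ℝ a₁ a₂ - b) := by
    rw [midpoint_eq_smul_add, invOf_eq_inv]
    module
  rw [hmid, norm_smul, Real.norm_two]
  gcongr
  exact setDist_le_norm_sub (hA.midpoint_mem ha₁ ha₂) hb

theorem tendsto_sub_nhds_zero_of_tendsto_norm_sub_setDist [UniformConvexSpace X]
    {ι : Type*} {l : Filter ι} (hA : Convex ℝ A) {a a' b : ι → X} (ha : ∀ i, a i ∈ A)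
    (ha' : ∀ i, a' i ∈ A) (hb : ∀ i, b i ∈ B)
    (h : Tendsto (fun i => ‖a i - b i‖) l (𝓝 (setDist A B)))
    (h' : Tendsto (fun i => ‖a' i - b i‖) l (𝓝 (setDist A B))) :
    Tendsto (fun i => a i - a' i) l (𝓝 0) := by
  have hsum : Tendsto (fun i => ‖(a i - b i) + (a' i - b i)‖) l (𝓝 (2 * setDist A B)) :=
    tendsto_of_tendsto_of_tendsto_of_le_of_le tendsto_const_nhds (by simpa [two_mul] using h.add h')
      (fun i => two_mul_setDist_le_norm_add hA (ha i) (ha' i) (hb i)) fun i => norm_add_le _ _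
  simpa using tendsto_sub_nhds_zero_of_tendsto_norm h h' hsum

end SetDist

theorem stmt9_general {X : Type*} [NormedAddCommGroup X] [NormedSpace ℝ X]
    [UniformConvexSpace X]
    (A B : Set X) (hAconv : Convex ℝ A) (hBconv : Convex ℝ B)
    (x y w z u v : ℕ → X)
    (hxy : ∀ n, x n ∈ A ∧ y n ∈ B) (hwz : ∀ n, w n ∈ A ∧ z n ∈ B)
    (huv : ∀ n, u n ∈ B ∧ v n ∈ A)
    (h1 : Tendsto (fun n => ‖((x n, y n) : X × X) - (u n, v n)‖) atTop (𝓝 (setDist A B)))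
    (h2 : Tendsto (fun n => ‖((w n, z n) : X × X) - (u n, v n)‖) atTop (𝓝 (setDist A B))) :
    Tendsto (fun n => ‖((x n, y n) : X × X) - (w n, z n)‖) atTop (𝓝 0) := by
  have hBA {b a : X} (hb : b ∈ B) (ha : a ∈ A) : setDist A B ≤ ‖b - a‖ :=
    (setDist_comm A B).trans_le (setDist_le_norm_sub hb ha)
  obtain ⟨hxu, hyv⟩ := tendsto_of_tendsto_max_of_le
    (fun n => setDist_le_norm_sub (hxy n).1 (huv n).1) (fun n => hBA (hxy n).2 (huv n).2) h1
  obtain ⟨hwu, hzv⟩ := tendsto_of_tendsto_max_of_le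
    (fun n => setDist_le_norm_sub (hwz n).1 (huv n).1) (fun n => hBA (hwz n).2 (huv n).2) h2
  have hxw := tendsto_sub_nhds_zero_of_tendsto_norm_sub_setDist hAconv
    (fun n => (hxy n).1) (fun n => (hwz n).1) (fun n => (huv n).1) hxu hwu
  rw [setDist_comm] at hyv hzv
  have hyz := tendsto_sub_nhds_zero_of_tendsto_norm_sub_setDist hBconv
    (fun n => (hxy n).2) (fun n => (hwz n).2) (fun n => (huv n).2) hyv hzv
  simpa using (hxw.prodMk_nhds hyz).norm

theorem stmt9 {X : Type*} [NormedAddCommGroup X] [NormedSpace ℝ X]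
    [UniformConvexSpace X] [CompleteSpace X]
    (A B : Set X) (hA : A.Nonempty) (hB : B.Nonempty)
    (hAcl : IsClosed A) (hBcl : IsClosed B) (hAconv : Convex ℝ A) (hBconv : Convex ℝ B)
    (x y w z u v : ℕ → X)
    (hxy : ∀ n, x n ∈ A ∧ y n ∈ B) (hwz : ∀ n, w n ∈ A ∧ z n ∈ B)
    (huv : ∀ n, u n ∈ B ∧ v n ∈ A)
    (h1 : Tendsto (fun n => ‖((x n, y n) : X × X) - (u n, v n)‖) atTop (𝓝 (setDist A B)))
    (h2 : Tendsto (fun n => ‖((w n, z n) : X × X) - (u n, v n)‖) atTop (𝓝 (setDist A B))) :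
    Tendsto (fun n => ‖((x n, y n) : X × X) - (w n, z n)‖) atTop (𝓝 0) :=
  stmt9_general A B hAconv hBconv x y w z u v hxy hwz huv h1 h2
end

section
/- Let A, B be nonempty closed convex subsets of a uniformly convex Banach space X, and T a p-cyclic contraction mapping: T(A×B) ⊆ B, T(B×A) ⊆ A, and ‖T(x₁,y₁) − T(x₂,y₂)‖ ≤ λ‖(x₁,y₁) − (x₂,y₂)‖ + (1−λ)dist(A,B) for some λ ∈ (0,1). Then T has a unique coupled best proximity point. -/
open Filter Topology

lemma setDist_nonneg' {X : Type*} [NormedAddCommGroup X] (A B : Set X) : 0 ≤ setDist A B :=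
  Real.sInf_nonneg (by rintro x ⟨a, -, b, -, rfl⟩; exact norm_nonneg _)

lemma setDist_le' {X : Type*} [NormedAddCommGroup X] {A B : Set X} {a b : X}
    (ha : a ∈ A) (hb : b ∈ B) : setDist A B ≤ ‖a - b‖ :=
  csInf_le ⟨0, by rintro x ⟨a, -, b, -, rfl⟩; exact norm_nonneg _⟩ ⟨a, ha, b, hb, rfl⟩

/-- Quantitative uniform convexity lemma of Eldred–Veeramani. -/
lemma EVkey {X : Type*} [NormedAddCommGroup X] [NormedSpace ℝ X] [UniformConvexSpace X]
    (A B : Set X) (hAconv : Convex ℝ A) (d : ℝ) (hd0 : 0 ≤ d)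
    (hlow : ∀ a ∈ A, ∀ b ∈ B, d ≤ ‖a - b‖) {ε : ℝ} (hε : 0 < ε) :
    ∃ δ > 0, ∀ u ∈ A, ∀ w ∈ A, ∀ v ∈ B,
      ‖u - v‖ ≤ d + δ → ‖w - v‖ ≤ d + δ → ‖u - w‖ ≤ ε := by
  rcases eq_or_lt_of_le hd0 with hd | hd
  · refine ⟨ε/2, by positivity, fun u hu w hw v hv h1 h2 => ?_⟩
    have h3 : ‖u - w‖ ≤ ‖u - v‖ + ‖w - v‖ := by
      have := norm_sub_le_norm_sub_add_norm_sub u v w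
      rwa [norm_sub_rev v w] at this
    linarith
  · obtain ⟨δ₁, hδ₁, H⟩ := exists_forall_closed_ball_dist_add_le_two_sub X
      (show (0:ℝ) < ε/(d+1) by positivity)
    refine ⟨min 1 (d*δ₁/4), by positivity, fun u hu w hw v hv h1 h2 => ?_⟩
    set δ := min 1 (d*δ₁/4) with hδdef
    have hδ1 : δ ≤ 1 := min_le_left _ _
    have hδ2 : δ ≤ d*δ₁/4 := min_le_right _ _
    have hδpos : 0 < δ := by positivity
    by_contra hcon
    push_neg at hcon
    have hR : 0 < d + δ := by positivity
    have hx1 : ‖(d+δ)⁻¹ • (u - v)‖ ≤ 1 := by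
      rw [norm_smul, Real.norm_eq_abs, abs_of_pos (inv_pos.2 hR), inv_mul_le_iff₀ hR]
      simpa using h1
    have hy1 : ‖(d+δ)⁻¹ • (w - v)‖ ≤ 1 := by
      rw [norm_smul, Real.norm_eq_abs, abs_of_pos (inv_pos.2 hR), inv_mul_le_iff₀ hR]
      simpa using h2
    have hxy : ε/(d+1) ≤ ‖(d+δ)⁻¹ • (u - v) - (d+δ)⁻¹ • (w - v)‖ := by
      rw [← smul_sub, show u - v - (w - v) = u - w by abel, norm_smul, Real.norm_eq_abs,
        abs_of_pos (inv_pos.2 hR)]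
      have h4 : ε / (d+1) ≤ ε / (d+δ) := by
        apply div_le_div_of_nonneg_left hε.le hR
        linarith
      calc ε/(d+1) ≤ ε/(d+δ) := h4
        _ ≤ (d+δ)⁻¹ * ‖u - w‖ := by
            rw [div_eq_inv_mul]
            exact mul_le_mul_of_nonneg_left hcon.le (inv_pos.2 hR).le
    have h3 := H hx1 hy1 hxy
    rw [← smul_add, norm_smul, Real.norm_eq_abs, abs_of_pos (inv_pos.2 hR),
      inv_mul_le_iff₀ hR] at h3
    have hm : (1/2:ℝ) • u + (1/2:ℝ) • w ∈ A := hAconv hu hw (by norm_num) (by norm_num) (by norm_num)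
    have hmid := hlow _ hm v hv
    have heq : (u - v) + (w - v) = (2:ℝ) • ((1/2:ℝ) • u + (1/2:ℝ) • w - v) := by
      module
    rw [heq, norm_smul, Real.norm_eq_abs] at h3
    have habs : |(2:ℝ)| = 2 := by norm_num
    rw [habs] at h3
    nlinarith [mul_pos hd hδ₁, mul_pos hδpos hδ₁]

/-- Rigidity: two points of `A` at exactly distance `d` from a common point of `B` coincide. -/
lemma EVrigid {X : Type*} [NormedAddCommGroup X] [NormedSpace ℝ X] [UniformConvexSpace X]
    (A B : Set X) (hAconv : Convex ℝ A) (d : ℝ) (hd0 : 0 ≤ d)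
    (hlow : ∀ a ∈ A, ∀ b ∈ B, d ≤ ‖a - b‖) {u w v : X} (hu : u ∈ A) (hw : w ∈ A) (hv : v ∈ B)
    (h1 : ‖u - v‖ = d) (h2 : ‖w - v‖ = d) : u = w := by
  have h0 : ∀ ε : ℝ, 0 < ε → ‖u - w‖ ≤ 0 + ε := by
    intro ε hε
    obtain ⟨δ, hδ, H⟩ := EVkey A B hAconv d hd0 hlow hε
    have := H u hu w hw v hv (by rw [h1]; linarith) (by rw [h2]; linarith)
    linarith
  have := le_of_forall_pos_le_add h0
  exact sub_eq_zero.1 (norm_le_zero_iff.1 this)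

/-- The coupled Picard iteration. -/
noncomputable def EVIter {X : Type*} (T : X → X → X) (p : X × X) : ℕ → X × X
  | 0 => p
  | n+1 => (T (EVIter T p n).1 (EVIter T p n).2, T (EVIter T p n).2 (EVIter T p n).1)

set_option maxHeartbeats 1000000

theorem stmt11 {X : Type*} [NormedAddCommGroup X] [NormedSpace ℝ X]
    [UniformConvexSpace X] [CompleteSpace X]
    (A B : Set X) (hA : A.Nonempty) (hB : B.Nonempty)
    (hAcl : IsClosed A) (hBcl : IsClosed B) (hAconv : Convex ℝ A) (hBconv : Convex ℝ B)
    (T : X → X → X) (lam : ℝ) (hlam : lam ∈ Set.Ioo (0:ℝ) 1)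
    (hTB : ∀ x ∈ A, ∀ y ∈ B, T x y ∈ B)
    (hTA : ∀ x ∈ B, ∀ y ∈ A, T x y ∈ A)
    (hT : ∀ x₁ ∈ A, ∀ y₁ ∈ B, ∀ x₂ ∈ B, ∀ y₂ ∈ A,
      ‖T x₁ y₁ - T x₂ y₂‖ ≤ lam * ‖((x₁, y₁) : X × X) - (x₂, y₂)‖
        + (1 - lam) * setDist A B) :
    ∃! p : X × X, p.1 ∈ A ∧ p.2 ∈ B ∧
      ‖p.1 - T p.1 p.2‖ = setDist A B ∧ ‖p.2 - T p.2 p.1‖ = setDist A B := by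
  obtain ⟨a0, ha0⟩ := hA
  obtain ⟨b0, hb0⟩ := hB
  obtain ⟨hl0, hl1⟩ := hlam
  set d := setDist A B with hddef
  have hd0 : 0 ≤ d := setDist_nonneg' A B
  have hlowAB : ∀ a ∈ A, ∀ b ∈ B, d ≤ ‖a - b‖ := fun a ha b hb => setDist_le' ha hb
  have hlowBA : ∀ b ∈ B, ∀ a ∈ A, d ≤ ‖b - a‖ := fun b hb a ha => by
    rw [norm_sub_rev]; exact setDist_le' ha hb
  -- restated contraction with max of component norms
  have hT' : ∀ x₁ ∈ A, ∀ y₁ ∈ B, ∀ x₂ ∈ B, ∀ y₂ ∈ A,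
      ‖T x₁ y₁ - T x₂ y₂‖ ≤ lam * max ‖x₁ - x₂‖ ‖y₁ - y₂‖ + (1 - lam) * d := by
    intro x₁ h1 y₁ h2 x₂ h3 y₂ h4
    have h5 := hT x₁ h1 y₁ h2 x₂ h3 y₂ h4
    have h6 : ‖((x₁, y₁) : X × X) - (x₂, y₂)‖ = max ‖x₁ - x₂‖ ‖y₁ - y₂‖ := by
      simp [Prod.norm_def]
    rwa [h6] at h5
  -- rigidity in both directions
  have rigidA : ∀ u' ∈ A, ∀ w' ∈ A, ∀ v' ∈ B, ‖u' - v'‖ = d → ‖w' - v'‖ = d → u' = w' :=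
    fun u' hu' w' hw' v' hv' e1 e2 => EVrigid A B hAconv d hd0 hlowAB hu' hw' hv' e1 e2
  have rigidB : ∀ u' ∈ B, ∀ w' ∈ B, ∀ v' ∈ A, ‖u' - v'‖ = d → ‖w' - v'‖ = d → u' = w' :=
    fun u' hu' w' hw' v' hv' e1 e2 => EVrigid B A hBconv d hd0 hlowBA hu' hw' hv' e1 e2
  -- the iteration sequences
  set u : ℕ → X := fun n => (EVIter T (a0, b0) n).1 with hudef
  set v : ℕ → X := fun n => (EVIter T (a0, b0) n).2 with hvdef
  have huS : ∀ n, u (n+1) = T (u n) (v n) := fun n => rfl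
  have hvS : ∀ n, v (n+1) = T (v n) (u n) := fun n => rfl
  have hmem : ∀ n, (Even n → u n ∈ A ∧ v n ∈ B) ∧ (¬ Even n → u n ∈ B ∧ v n ∈ A) := by
    intro n
    induction n with
    | zero => exact ⟨fun _ => ⟨ha0, hb0⟩, fun h => absurd Even.zero h⟩
    | succ k ih =>
      constructor
      · intro hk1
        have hk : ¬ Even k := (Nat.even_add_one.1 hk1)
        obtain ⟨h1, h2⟩ := ih.2 hk
        exact ⟨by rw [huS]; exact hTA _ h1 _ h2, by rw [hvS]; exact hTB _ h2 _ h1⟩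
      · intro hk1
        have hk : Even k := by
          by_contra hk
          exact hk1 (Nat.even_add_one.2 hk)
        obtain ⟨h1, h2⟩ := ih.1 hk
        exact ⟨by rw [huS]; exact hTB _ h1 _ h2, by rw [hvS]; exact hTA _ h2 _ h1⟩
  -- the "joint distance" function
  set M : ℕ → ℕ → ℝ := fun m n => max ‖u m - u n‖ ‖v m - v n‖ with hMdef
  have hMmn : ∀ m n, M m n = max ‖u m - u n‖ ‖v m - v n‖ := fun _ _ => rfl
  have hM0 : ∀ m n, 0 ≤ M m n := fun m n => le_trans (norm_nonneg _) (le_max_left _ _)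
  have hMsym : ∀ m n, M m n = M n m := by
    intro m n
    rw [hMmn, hMmn, norm_sub_rev, norm_sub_rev (v m)]
  have huM : ∀ m n, ‖u m - u n‖ ≤ M m n := fun m n => le_max_left _ _
  have hvM : ∀ m n, ‖v m - v n‖ ≤ M m n := fun m n => le_max_right _ _
  -- cross-parity contraction step
  have crossE : ∀ m n, Even m → ¬ Even n → M (m+1) (n+1) ≤ lam * M m n + (1-lam)*d := by
    intro m n hm hn
    obtain ⟨hum, hvm⟩ := (hmem m).1 hm
    obtain ⟨hun, hvn⟩ := (hmem n).2 hn
    rw [hMmn]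
    apply max_le
    · rw [huS, huS]
      calc ‖T (u m) (v m) - T (u n) (v n)‖
          ≤ lam * max ‖u m - u n‖ ‖v m - v n‖ + (1-lam)*d := hT' _ hum _ hvm _ hun _ hvn
        _ = lam * M m n + (1-lam)*d := by rw [hMmn]
    · rw [hvS, hvS, norm_sub_rev]
      calc ‖T (v n) (u n) - T (v m) (u m)‖
          ≤ lam * max ‖v n - v m‖ ‖u n - u m‖ + (1-lam)*d := hT' _ hvn _ hun _ hvm _ hum
        _ = lam * M m n + (1-lam)*d := by
            rw [hMmn, norm_sub_rev (v n), norm_sub_rev (u n), max_comm]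
  have crossP : ∀ m n, ¬(Even m ↔ Even n) → M (m+1) (n+1) ≤ lam * M m n + (1-lam)*d := by
    intro m n h
    by_cases hm : Even m
    · exact crossE m n hm (fun hn => h ⟨fun _ => hn, fun _ => hm⟩)
    · have hn : Even n := by tauto
      have h2 := crossE n m hn hm
      rwa [hMsym (n+1) (m+1), hMsym n m] at h2
  have crossIter : ∀ t m n, ¬(Even m ↔ Even n) →
      M (m+t) (n+t) ≤ lam^t * M m n + (1-lam^t)*d := by
    intro t
    induction t with
    | zero => intro m n _; simp
    | succ k ih =>
      intro m n h
      have h2 : ¬(Even (m+k) ↔ Even (n+k)) := by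
        simp only [Nat.even_add] at *
        tauto
      have h3 := crossP _ _ h2
      have h4 := ih m n h
      have e1 : m+(k+1) = (m+k)+1 := rfl
      have e2 : n+(k+1) = (n+k)+1 := rfl
      rw [e1, e2]
      calc M ((m+k)+1) ((n+k)+1) ≤ lam * M (m+k) (n+k) + (1-lam)*d := h3
        _ ≤ lam * (lam^k * M m n + (1-lam^k)*d) + (1-lam)*d :=
            add_le_add_left (mul_le_mul_of_nonneg_left h4 hl0.le) _
        _ = lam^(k+1) * M m n + (1-lam^(k+1))*d := by ring
  -- consecutive distances
  set Dn : ℕ → ℝ := fun n => M (n+1) n with hDndef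
  have hDn0 : ∀ n, 0 ≤ Dn n := fun n => hM0 _ _
  have hDstep : ∀ n, Dn (n+1) ≤ lam * Dn n + (1-lam)*d := by
    intro n
    exact crossP (n+1) n (by rw [Nat.even_add_one]; tauto)
  have hDbound : ∀ n, Dn n ≤ d + lam^n * Dn 0 := by
    intro n
    induction n with
    | zero => simp; linarith [hDn0 0]
    | succ k ih =>
      calc Dn (k+1) ≤ lam * Dn k + (1-lam)*d := hDstep k
        _ ≤ lam * (d + lam^k * Dn 0) + (1-lam)*d :=
            add_le_add_left (mul_le_mul_of_nonneg_left ih hl0.le) _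
        _ = d + lam^(k+1) * Dn 0 := by ring
  -- odd-index parity fact
  have hodd : ∀ k : ℕ, ¬ Even (2*k+1) :=
    fun k h => (Nat.even_add_one.1 h) (even_two_mul k)
  have hoddP : ∀ k : ℕ, ¬(Even (2*k+1) ↔ Even 0) :=
    fun k h => hodd k (h.2 Even.zero)
  -- boundedness of the odd subsequence distances to the start
  set K : ℝ := (1-lam^2)*d + Dn 1 + Dn 0 with hKdef
  have hlamsq : 0 < 1 - lam^2 := by nlinarith
  have hK0 : 0 ≤ K := by
    have h1 : 0 ≤ (1-lam^2)*d := mul_nonneg hlamsq.le hd0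
    have h2 := hDn0 0
    have h3 := hDn0 1
    rw [hKdef]
    linarith
  have hstep3 : ∀ k, M (2*k+3) 0 ≤ lam^2 * M (2*k+1) 0 + K := by
    intro k
    have h := crossIter 2 (2*k+1) 0 (hoddP k)
    have e1 : (2*k+1)+2 = 2*k+3 := by omega
    have e2 : (0:ℕ)+2 = 2 := by omega
    rw [e1, e2] at h
    have t2 : M (2*k+3) 0 ≤ M (2*k+3) 2 + (Dn 1 + Dn 0) := by
      rw [hMmn (2*k+3) 0]
      apply max_le
      · calc ‖u (2*k+3) - u 0‖ ≤ ‖u (2*k+3) - u 2‖ + ‖u 2 - u 0‖ :=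
              norm_sub_le_norm_sub_add_norm_sub _ _ _
          _ ≤ ‖u (2*k+3) - u 2‖ + (‖u 2 - u 1‖ + ‖u 1 - u 0‖) :=
              add_le_add_right (norm_sub_le_norm_sub_add_norm_sub _ _ _) _
          _ ≤ M (2*k+3) 2 + (Dn 1 + Dn 0) := by
              have := huM (2*k+3) 2
              have := huM 2 1
              have := huM 1 0
              linarith [huM (2*k+3) 2, huM 2 1, huM 1 0]
      · calc ‖v (2*k+3) - v 0‖ ≤ ‖v (2*k+3) - v 2‖ + ‖v 2 - v 0‖ :=
              norm_sub_le_norm_sub_add_norm_sub _ _ _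
          _ ≤ ‖v (2*k+3) - v 2‖ + (‖v 2 - v 1‖ + ‖v 1 - v 0‖) :=
              add_le_add_right (norm_sub_le_norm_sub_add_norm_sub _ _ _) _
          _ ≤ M (2*k+3) 2 + (Dn 1 + Dn 0) := by
              linarith [hvM (2*k+3) 2, hvM 2 1, hvM 1 0]
    calc M (2*k+3) 0 ≤ M (2*k+3) 2 + (Dn 1 + Dn 0) := t2
      _ ≤ (lam^2 * M (2*k+1) 0 + (1-lam^2)*d) + (Dn 1 + Dn 0) := add_le_add_left h _
      _ = lam^2 * M (2*k+1) 0 + K := by rw [hKdef]; ring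
  set Mb : ℝ := max (M 1 0) (K/(1-lam^2)) with hMbdef
  have hMb0 : 0 ≤ Mb := le_trans (hM0 1 0) (le_max_left _ _)
  have hKMb : K ≤ (1-lam^2) * Mb := by
    have h := le_max_right (M 1 0) (K/(1-lam^2))
    rw [div_le_iff₀ hlamsq] at h
    linarith [h]
  have hMb : ∀ k, M (2*k+1) 0 ≤ Mb := by
    intro k
    induction k with
    | zero =>
      have e0 : 2*0+1 = 1 := rfl
      rw [e0, hMbdef]
      exact le_max_left _ _
    | succ j ih =>
      have e1 : 2*(j+1)+1 = 2*j+3 := by omega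
      rw [e1]
      calc M (2*j+3) 0 ≤ lam^2 * M (2*j+1) 0 + K := hstep3 j
        _ ≤ lam^2 * Mb + K := by nlinarith
        _ ≤ lam^2 * Mb + (1-lam^2)*Mb := add_le_add_right hKMb _
        _ = Mb := by ring
  -- the key tail estimate
  have crossBound : ∀ n m : ℕ, n < m → M (2*m) (2*n+1) ≤ lam^(2*n+1) * Mb + d := by
    intro n m hnm
    have h := crossIter (2*n+1) (2*(m-n-1)+1) 0 (hoddP (m-n-1))
    have e1 : (2*(m-n-1)+1) + (2*n+1) = 2*m := by omega
    have e2 : 0 + (2*n+1) = 2*n+1 := by omega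
    rw [e1, e2] at h
    have h5 : lam^(2*n+1) * M (2*(m-n-1)+1) 0 ≤ lam^(2*n+1) * Mb :=
      mul_le_mul_of_nonneg_left (hMb _) (pow_nonneg hl0.le _)
    have h6 : 0 ≤ lam^(2*n+1) * d := mul_nonneg (pow_nonneg hl0.le _) hd0
    calc M (2*m) (2*n+1) ≤ lam^(2*n+1) * M (2*(m-n-1)+1) 0 + (1-lam^(2*n+1))*d := h
      _ ≤ lam^(2*n+1) * Mb + d := by nlinarith
  -- Cauchy property of both even subsequences
  set C0 : ℝ := max Mb (Dn 0) + 1 with hC0def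
  have hC0 : 0 < C0 := by
    have := le_max_left Mb (Dn 0)
    nlinarith [hMb0]
  have hMbC : Mb ≤ C0 := by
    have := le_max_left Mb (Dn 0); linarith
  have hDC : Dn 0 ≤ C0 := by
    have := le_max_right Mb (Dn 0); linarith
  have main : ∀ ε : ℝ, 0 < ε → ∃ N, ∀ m, N < m →
      ‖u (2*m) - u (2*N+2)‖ ≤ ε ∧ ‖v (2*m) - v (2*N+2)‖ ≤ ε := by
    intro ε hε
    obtain ⟨δA, hδA, HA⟩ := EVkey A B hAconv d hd0 hlowAB hε
    obtain ⟨δB, hδB, HB⟩ := EVkey B A hBconv d hd0 hlowBA hε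
    set δ := min δA δB with hδdef
    have hδ : 0 < δ := lt_min hδA hδB
    obtain ⟨N₀, hN₀⟩ := exists_pow_lt_of_lt_one (show 0 < δ/C0 from div_pos hδ hC0) hl1
    have hlamt : ∀ t : ℕ, N₀ ≤ t → lam^t * C0 ≤ δ := by
      intro t ht
      have h1 : lam^t ≤ lam^N₀ := pow_le_pow_of_le_one hl0.le hl1.le ht
      have h2 : lam^t * C0 ≤ lam^N₀ * C0 := mul_le_mul_of_nonneg_right h1 hC0.le
      have h3 : lam^N₀ * C0 ≤ (δ/C0) * C0 := mul_le_mul_of_nonneg_right hN₀.le hC0.le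
      rw [div_mul_cancel₀ _ (ne_of_gt hC0)] at h3
      linarith
    refine ⟨N₀, fun m hm => ?_⟩
    have hlam1 : lam^(2*N₀+1) * C0 ≤ δ := hlamt _ (by omega)
    -- memberships
    obtain ⟨humA, hvmB⟩ := (hmem (2*m)).1 (even_two_mul m)
    have e2 : 2*N₀+2 = 2*(N₀+1) := by omega
    obtain ⟨hu2A, hv2B⟩ := (hmem (2*N₀+2)).1 (by rw [e2]; exact even_two_mul (N₀+1))
    obtain ⟨hu1B, hv1A⟩ := (hmem (2*N₀+1)).2 (hodd N₀)
    -- estimates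
    have hb1 : M (2*m) (2*N₀+1) ≤ d + δ := by
      have := crossBound N₀ m hm
      have h5 : lam^(2*N₀+1) * Mb ≤ lam^(2*N₀+1) * C0 :=
        mul_le_mul_of_nonneg_left hMbC (pow_nonneg hl0.le _)
      linarith
    have hb2 : Dn (2*N₀+1) ≤ d + δ := by
      have h1 := hDbound (2*N₀+1)
      have h5 : lam^(2*N₀+1) * Dn 0 ≤ lam^(2*N₀+1) * C0 :=
        mul_le_mul_of_nonneg_left hDC (pow_nonneg hl0.le _)
      linarith
    constructor
    · apply HA _ humA _ hu2A _ hu1B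
      · calc ‖u (2*m) - u (2*N₀+1)‖ ≤ M (2*m) (2*N₀+1) := huM _ _
          _ ≤ d + δ := hb1
          _ ≤ d + δA := by have := min_le_left δA δB; linarith
      · calc ‖u (2*N₀+2) - u (2*N₀+1)‖ ≤ M (2*N₀+2) (2*N₀+1) := huM _ _
          _ = Dn (2*N₀+1) := rfl
          _ ≤ d + δA := by have := min_le_left δA δB; linarith
    · apply HB _ hvmB _ hv2B _ hv1A
      · calc ‖v (2*m) - v (2*N₀+1)‖ ≤ M (2*m) (2*N₀+1) := hvM _ _
          _ ≤ d + δB := by have := min_le_right δA δB; linarith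
      · calc ‖v (2*N₀+2) - v (2*N₀+1)‖ ≤ M (2*N₀+2) (2*N₀+1) := hvM _ _
          _ = Dn (2*N₀+1) := rfl
          _ ≤ d + δB := by have := min_le_right δA δB; linarith
  have hcu : CauchySeq (fun n => u (2*n)) := by
    rw [Metric.cauchySeq_iff']
    intro ε hε
    obtain ⟨N, hN⟩ := main (ε/2) (by positivity)
    refine ⟨N+1, fun n hn => ?_⟩
    rw [dist_eq_norm]
    have e1 : 2*(N+1) = 2*N+2 := by omega
    rw [e1]
    calc ‖u (2*n) - u (2*N+2)‖ ≤ ε/2 := (hN n (by omega)).1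
      _ < ε := by linarith
  have hcv : CauchySeq (fun n => v (2*n)) := by
    rw [Metric.cauchySeq_iff']
    intro ε hε
    obtain ⟨N, hN⟩ := main (ε/2) (by positivity)
    refine ⟨N+1, fun n hn => ?_⟩
    rw [dist_eq_norm]
    have e1 : 2*(N+1) = 2*N+2 := by omega
    rw [e1]
    calc ‖v (2*n) - v (2*N+2)‖ ≤ ε/2 := (hN n (by omega)).2
      _ < ε := by linarith
  obtain ⟨x, hx⟩ := cauchySeq_tendsto_of_complete hcu
  obtain ⟨y, hy⟩ := cauchySeq_tendsto_of_complete hcv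
  have hxA : x ∈ A := hAcl.mem_of_tendsto hx
    (Eventually.of_forall fun n => ((hmem (2*n)).1 (even_two_mul n)).1)
  have hyB : y ∈ B := hBcl.mem_of_tendsto hy
    (Eventually.of_forall fun n => ((hmem (2*n)).1 (even_two_mul n)).2)
  -- approximations at large n
  have happrox : ∀ ε₁ : ℝ, 0 < ε₁ → ∃ n : ℕ, ‖u (2*n) - x‖ ≤ ε₁ ∧ ‖u (2*n+2) - x‖ ≤ ε₁ ∧
      ‖v (2*n) - y‖ ≤ ε₁ ∧ ‖v (2*n+2) - y‖ ≤ ε₁ ∧ lam^(2*n) * Dn 0 ≤ ε₁ := by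
    intro ε₁ hε₁
    obtain ⟨N₁, hN₁⟩ := Metric.tendsto_atTop.1 hx ε₁ hε₁
    obtain ⟨N₂, hN₂⟩ := Metric.tendsto_atTop.1 hy ε₁ hε₁
    obtain ⟨N₃, hN₃⟩ := exists_pow_lt_of_lt_one (show 0 < ε₁/(Dn 0 + 1) from div_pos hε₁ (by linarith [hDn0 0])) hl1
    set n := N₁ + N₂ + N₃ with hndef
    have e1 : 2*n+2 = 2*(n+1) := by omega
    refine ⟨n, ?_, ?_, ?_, ?_, ?_⟩
    · have := hN₁ n (by omega); rw [dist_eq_norm] at this; exact this.le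
    · have := hN₁ (n+1) (by omega); rw [dist_eq_norm] at this; rw [e1]; exact this.le
    · have := hN₂ n (by omega); rw [dist_eq_norm] at this; exact this.le
    · have := hN₂ (n+1) (by omega); rw [dist_eq_norm] at this; rw [e1]; exact this.le
    · have h1 : lam^(2*n) ≤ lam^N₃ := pow_le_pow_of_le_one hl0.le hl1.le (by omega)
      have h2 : lam^(2*n) * Dn 0 ≤ lam^N₃ * (Dn 0 + 1) := by
        have h2a : lam^(2*n) * Dn 0 ≤ lam^N₃ * Dn 0 :=
          mul_le_mul_of_nonneg_right h1 (hDn0 0)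
        have h2b : lam^N₃ * Dn 0 ≤ lam^N₃ * (Dn 0 + 1) :=
          mul_le_mul_of_nonneg_left (by linarith) (pow_nonneg hl0.le N₃)
        linarith
      have h3 : lam^N₃ * (Dn 0 + 1) ≤ (ε₁/(Dn 0 + 1)) * (Dn 0 + 1) :=
        mul_le_mul_of_nonneg_right hN₃.le (by linarith [hDn0 0])
      rw [div_mul_cancel₀ _ (by linarith [hDn0 0] : Dn 0 + 1 ≠ 0)] at h3
      linarith
  -- the limit pair is a coupled best proximity point
  have hTxyB : T x y ∈ B := hTB _ hxA _ hyB
  have hTyxA : T y x ∈ A := hTA _ hyB _ hxA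
  have hbpp : ‖x - T x y‖ ≤ d ∧ ‖y - T y x‖ ≤ d := by
    have key : ∀ ε : ℝ, 0 < ε → ‖x - T x y‖ ≤ d + ε ∧ ‖y - T y x‖ ≤ d + ε := by
      intro ε hε
      obtain ⟨n, ha1, ha2, ha3, ha4, ha5⟩ := happrox (ε/4) (by positivity)
      obtain ⟨hu1B, hv1A⟩ := (hmem (2*n+1)).2 (hodd n)
      have hD2n : Dn (2*n) ≤ d + ε/4 := by
        have := hDbound (2*n); linarith
      have est1 : ‖x - u (2*n+1)‖ ≤ d + 2*(ε/4) := by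
        calc ‖x - u (2*n+1)‖ ≤ ‖x - u (2*n)‖ + ‖u (2*n) - u (2*n+1)‖ :=
            norm_sub_le_norm_sub_add_norm_sub _ _ _
          _ ≤ ε/4 + Dn (2*n) := by
              have h1 : ‖x - u (2*n)‖ = ‖u (2*n) - x‖ := norm_sub_rev _ _
              have h2 : ‖u (2*n) - u (2*n+1)‖ = ‖u (2*n+1) - u (2*n)‖ := norm_sub_rev _ _
              have h3 := huM (2*n+1) (2*n)
              rw [h1, h2]
              exact add_le_add ha1 h3
          _ ≤ d + 2*(ε/4) := by linarith
      have est2 : ‖y - v (2*n+1)‖ ≤ d + 2*(ε/4) := by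
        calc ‖y - v (2*n+1)‖ ≤ ‖y - v (2*n)‖ + ‖v (2*n) - v (2*n+1)‖ :=
            norm_sub_le_norm_sub_add_norm_sub _ _ _
          _ ≤ ε/4 + Dn (2*n) := by
              rw [norm_sub_rev y (v (2*n)), norm_sub_rev (v (2*n)) (v (2*n+1))]
              exact add_le_add ha3 (hvM (2*n+1) (2*n))
          _ ≤ d + 2*(ε/4) := by linarith
      have est3 : ‖T x y - u (2*n+2)‖ ≤ d + 2*(ε/4) := by
        have h1 : u (2*n+2) = T (u (2*n+1)) (v (2*n+1)) := huS (2*n+1)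
        rw [h1]
        calc ‖T x y - T (u (2*n+1)) (v (2*n+1))‖
            ≤ lam * max ‖x - u (2*n+1)‖ ‖y - v (2*n+1)‖ + (1-lam)*d :=
              hT' _ hxA _ hyB _ hu1B _ hv1A
          _ ≤ lam * (d + 2*(ε/4)) + (1-lam)*d :=
              add_le_add_left (mul_le_mul_of_nonneg_left (max_le est1 est2) hl0.le) _
          _ ≤ d + 2*(ε/4) := by
              have h5 : lam * (2*(ε/4)) ≤ 1 * (2*(ε/4)) :=
                mul_le_mul_of_nonneg_right hl1.le (by linarith)
              nlinarith
      have est4 : ‖T y x - v (2*n+2)‖ ≤ d + 2*(ε/4) := by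
        have h1 : v (2*n+2) = T (v (2*n+1)) (u (2*n+1)) := hvS (2*n+1)
        rw [h1, norm_sub_rev]
        calc ‖T (v (2*n+1)) (u (2*n+1)) - T y x‖
            ≤ lam * max ‖v (2*n+1) - y‖ ‖u (2*n+1) - x‖ + (1-lam)*d :=
              hT' _ hv1A _ hu1B _ hyB _ hxA
          _ ≤ lam * (d + 2*(ε/4)) + (1-lam)*d := by
              have h2 : ‖v (2*n+1) - y‖ ≤ d + 2*(ε/4) := by
                rw [norm_sub_rev]; exact est2
              have h3 : ‖u (2*n+1) - x‖ ≤ d + 2*(ε/4) := by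
                rw [norm_sub_rev]; exact est1
              exact add_le_add_left (mul_le_mul_of_nonneg_left (max_le h2 h3) hl0.le) _
          _ ≤ d + 2*(ε/4) := by
              have h5 : lam * (2*(ε/4)) ≤ 1 * (2*(ε/4)) :=
                mul_le_mul_of_nonneg_right hl1.le (by linarith)
              nlinarith
      constructor
      · calc ‖x - T x y‖ ≤ ‖x - u (2*n+2)‖ + ‖u (2*n+2) - T x y‖ :=
            norm_sub_le_norm_sub_add_norm_sub _ _ _
          _ ≤ ε/4 + (d + 2*(ε/4)) := by
              rw [norm_sub_rev x (u (2*n+2)), norm_sub_rev (u (2*n+2)) (T x y)]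
              exact add_le_add ha2 est3
          _ ≤ d + ε := by linarith
      · calc ‖y - T y x‖ ≤ ‖y - v (2*n+2)‖ + ‖v (2*n+2) - T y x‖ :=
            norm_sub_le_norm_sub_add_norm_sub _ _ _
          _ ≤ ε/4 + (d + 2*(ε/4)) := by
              rw [norm_sub_rev y (v (2*n+2)), norm_sub_rev (v (2*n+2)) (T y x)]
              exact add_le_add ha4 est4
          _ ≤ d + ε := by linarith
    constructor
    · exact le_of_forall_pos_le_add (fun ε hε => (key ε hε).1)
    · exact le_of_forall_pos_le_add (fun ε hε => (key ε hε).2)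
  have hxTd : ‖x - T x y‖ = d := le_antisymm hbpp.1 (hlowAB _ hxA _ hTxyB)
  have hyTd : ‖y - T y x‖ = d := le_antisymm hbpp.2 (hlowBA _ hyB _ hTyxA)
  -- uniqueness
  have bppEq : ∀ p₁ ∈ A, ∀ q₁ ∈ B, ∀ p₂ ∈ A, ∀ q₂ ∈ B,
      ‖p₁ - T p₁ q₁‖ = d → ‖q₁ - T q₁ p₁‖ = d → ‖p₂ - T p₂ q₂‖ = d → ‖q₂ - T q₂ p₂‖ = d →
      p₁ = p₂ ∧ q₁ = q₂ := by
    intro p₁ hp₁ q₁ hq₁ p₂ hp₂ q₂ hq₂ e1 e2 e3 e4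
    have ha₁ : T p₁ q₁ ∈ B := hTB _ hp₁ _ hq₁
    have hb₁ : T q₁ p₁ ∈ A := hTA _ hq₁ _ hp₁
    have ha₂ : T p₂ q₂ ∈ B := hTB _ hp₂ _ hq₂
    have hb₂ : T q₂ p₂ ∈ A := hTA _ hq₂ _ hp₂
    -- cyclic rigidity: T (T p q) (T q p) = p
    have hcyc : ∀ p ∈ A, ∀ q ∈ B, ‖p - T p q‖ = d → ‖q - T q p‖ = d →
        T (T p q) (T q p) = p ∧ T (T q p) (T p q) = q := by
      intro p hp q hq f1 f2
      have haB : T p q ∈ B := hTB _ hp _ hq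
      have hbA : T q p ∈ A := hTA _ hq _ hp
      have hmA : T (T p q) (T q p) ∈ A := hTA _ haB _ hbA
      have hmB : T (T q p) (T p q) ∈ B := hTB _ hbA _ haB
      have g1 : ‖T (T p q) (T q p) - T p q‖ = d := by
        apply le_antisymm _ (hlowAB _ hmA _ haB)
        rw [norm_sub_rev]
        calc ‖T p q - T (T p q) (T q p)‖
            ≤ lam * max ‖p - T p q‖ ‖q - T q p‖ + (1-lam)*d := hT' _ hp _ hq _ haB _ hbA
          _ ≤ d := by rw [f1, f2, max_self]; nlinarith
      have g2 : ‖T (T q p) (T p q) - T q p‖ = d := by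
        apply le_antisymm _ (hlowBA _ hmB _ hbA)
        calc ‖T (T q p) (T p q) - T q p‖
            ≤ lam * max ‖T q p - q‖ ‖T p q - p‖ + (1-lam)*d := hT' _ hbA _ haB _ hq _ hp
          _ ≤ d := by
              rw [norm_sub_rev (T q p), norm_sub_rev (T p q), f1, f2, max_self]
              nlinarith
      constructor
      · exact rigidA _ hmA _ hp _ haB g1 f1
      · exact rigidB _ hmB _ hq _ hbA g2 f2
    obtain ⟨hc1, hc1'⟩ := hcyc p₁ hp₁ q₁ hq₁ e1 e2
    obtain ⟨hc2, hc2'⟩ := hcyc p₂ hp₂ q₂ hq₂ e3 e4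
    -- α-β contraction argument
    set α := max ‖p₁ - T p₂ q₂‖ ‖q₁ - T q₂ p₂‖ with hαdef
    set β := max ‖p₂ - T p₁ q₁‖ ‖q₂ - T q₁ p₁‖ with hβdef
    have hαβ : α ≤ lam * β + (1-lam)*d := by
      rw [hαdef]
      apply max_le
      · rw [← hc1, norm_sub_rev]
        calc ‖T p₂ q₂ - T (T p₁ q₁) (T q₁ p₁)‖
            ≤ lam * max ‖p₂ - T p₁ q₁‖ ‖q₂ - T q₁ p₁‖ + (1-lam)*d :=
              hT' _ hp₂ _ hq₂ _ ha₁ _ hb₁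
          _ = lam * β + (1-lam)*d := by rw [hβdef]
      · rw [← hc1']
        calc ‖T (T q₁ p₁) (T p₁ q₁) - T q₂ p₂‖
            ≤ lam * max ‖T q₁ p₁ - q₂‖ ‖T p₁ q₁ - p₂‖ + (1-lam)*d :=
              hT' _ hb₁ _ ha₁ _ hq₂ _ hp₂
          _ = lam * β + (1-lam)*d := by
              rw [hβdef, norm_sub_rev (T q₁ p₁), norm_sub_rev (T p₁ q₁), max_comm]
    have hβα : β ≤ lam * α + (1-lam)*d := by
      rw [hβdef]
      apply max_le
      · rw [← hc2, norm_sub_rev]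
        calc ‖T p₁ q₁ - T (T p₂ q₂) (T q₂ p₂)‖
            ≤ lam * max ‖p₁ - T p₂ q₂‖ ‖q₁ - T q₂ p₂‖ + (1-lam)*d :=
              hT' _ hp₁ _ hq₁ _ ha₂ _ hb₂
          _ = lam * α + (1-lam)*d := by rw [hαdef]
      · rw [← hc2']
        calc ‖T (T q₂ p₂) (T p₂ q₂) - T q₁ p₁‖
            ≤ lam * max ‖T q₂ p₂ - q₁‖ ‖T p₂ q₂ - p₁‖ + (1-lam)*d :=
              hT' _ hb₂ _ ha₂ _ hq₁ _ hp₁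
          _ = lam * α + (1-lam)*d := by
              rw [hαdef, norm_sub_rev (T q₂ p₂), norm_sub_rev (T p₂ q₂), max_comm]
    have hαd : α ≤ d := by nlinarith
    have g1 : ‖p₁ - T p₂ q₂‖ = d := by
      apply le_antisymm _ (hlowAB _ hp₁ _ ha₂)
      calc ‖p₁ - T p₂ q₂‖ ≤ α := le_max_left _ _
        _ ≤ d := hαd
    have g2 : ‖q₁ - T q₂ p₂‖ = d := by
      apply le_antisymm _ (hlowBA _ hq₁ _ hb₂)
      calc ‖q₁ - T q₂ p₂‖ ≤ α := le_max_right _ _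
        _ ≤ d := hαd
    exact ⟨rigidA _ hp₁ _ hp₂ _ ha₂ g1 e3, rigidB _ hq₁ _ hq₂ _ hb₂ g2 e4⟩
  refine ⟨(x, y), ⟨hxA, hyB, hxTd, hyTd⟩, ?_⟩
  rintro ⟨x', y'⟩ ⟨h1, h2, h3, h4⟩
  obtain ⟨ex, ey⟩ := bppEq x' h1 y' h2 x hxA y hyB h3 h4 hxTd hyTd
  exact Prod.ext ex ey
end
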